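/- arXiv:2010.08633 — 2 statements merged into one kernel-verified Lean document; each statement's English description precedes it below -/
import Mathlib

section
/- Let f : {−1,1}^n → {−1,1}, let δ ∈ (0,1), let T° be a partial decision tree over {−1,1}^n, fix a leaf ℓ* of T° and a coordinate i ∈ [n], and let T°_{ℓ*→x_i} denote the partial tree obtained from T° by replacing the leaf ℓ* with an internal node that queries x_i (with two new leaves as its children). Then NS_δ(f, T°) − NS_δ(f, T°_{ℓ*→x_i}) = 2^{−|ℓ*|}·(δ/(2(1−δ)))·Inf_i^{(δ)}(f_{ℓ*}). -/
open Finset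

/-! Boolean cube `{-1,1}^n` encoded as `Fin n → Bool` (`false` ↦ -1, `true` ↦ 1). -/

/-- Expectation of `F` under the uniform distribution on `{-1,1}^n`. -/
noncomputable def expect {n : ℕ} (F : (Fin n → Bool) → ℝ) : ℝ :=
  (∑ x : Fin n → Bool, F x) / (2 : ℝ) ^ n

/-- `f` is `{-1,1}`-valued. -/
def isPM {n : ℕ} (f : (Fin n → Bool) → ℝ) : Prop := ∀ x, f x = 1 ∨ f x = -1

/-- Joint probability mass of the pair `(x, x̃)` where `x` is uniform on `{-1,1}^n` and
`x̃ ∼_δ x` is a `δ`-noisy copy of `x` (each coordinate rerandomized independently with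
probability `δ`, i.e. flipped with probability `δ/2`). -/
noncomputable def noiseWeight {n : ℕ} (δ : ℝ) (x y : Fin n → Bool) : ℝ :=
  ∏ i : Fin n, (1 / 2) * (if x i = y i then 1 - δ / 2 else δ / 2)

/-- Noise sensitivity `NS_δ(f) = Pr[f(x) ≠ f(x̃)]` for `x` uniform, `x̃ ∼_δ x`. -/
noncomputable def NS {n : ℕ} (δ : ℝ) (f : (Fin n → Bool) → ℝ) : ℝ :=
  ∑ x : Fin n → Bool, ∑ y : Fin n → Bool,
    noiseWeight δ x y * (if f x = f y then 0 else 1)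

/-- The `δ`-smoothed version `f_δ(x) = E_{x̃ ∼_δ x}[f(x̃)]`. -/
noncomputable def smooth {n : ℕ} (δ : ℝ) (f : (Fin n → Bool) → ℝ) (x : Fin n → Bool) : ℝ :=
  ∑ y : Fin n → Bool, (∏ i : Fin n, if x i = y i then 1 - δ / 2 else δ / 2) * f y

/-- The `±1` value of a Boolean coordinate. -/
def chiB (b : Bool) : ℝ := if b then 1 else -1

/-- Fourier coefficient `f̂(S) = E[f(x) ∏_{i ∈ S} x_i]`. -/
noncomputable def fcoef {n : ℕ} (f : (Fin n → Bool) → ℝ) (S : Finset (Fin n)) : ℝ :=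
  expect (fun x => f x * ∏ i ∈ S, chiB (x i))

/-- `δ`-noisy influence `Inf_i^{(δ)}(f) = ∑_{S ∋ i} (1-δ)^{|S|} f̂(S)²`. -/
noncomputable def noisyInf {n : ℕ} (δ : ℝ) (i : Fin n) (f : (Fin n → Bool) → ℝ) : ℝ :=
  ∑ S : Finset (Fin n), if i ∈ S then (1 - δ) ^ S.card * (fcoef f S) ^ 2 else 0

/-- `δ`-noisy `d`-wise influence `Inf_i^{(δ,d)}(f) = ∑_{S ∋ i, |S| ≤ d} (1-δ)^{|S|} f̂(S)²`. -/
noncomputable def noisyInfD {n : ℕ} (δ d : ℝ) (i : Fin n) (f : (Fin n → Bool) → ℝ) : ℝ :=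
  ∑ S : Finset (Fin n),
    if i ∈ S ∧ (S.card : ℝ) ≤ d then (1 - δ) ^ S.card * (fcoef f S) ^ 2 else 0

/-- Degree-`d` truncation of the `δ`-smoothed version of `f`:
`f_δ^{≤d}(x) = ∑_{|S| ≤ d} (1-δ)^{|S|} f̂(S) ∏_{i ∈ S} x_i`. -/
noncomputable def truncSmooth {n : ℕ} (δ d : ℝ) (f : (Fin n → Bool) → ℝ)
    (x : Fin n → Bool) : ℝ :=
  ∑ S : Finset (Fin n),
    if (S.card : ℝ) ≤ d then (1 - δ) ^ S.card * fcoef f S * ∏ i ∈ S, chiB (x i) else 0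

/-- The `i`-th discrete derivative `(D_i f)(x) = (f(x^{i=1}) - f(x^{i=-1})) / 2`. -/
noncomputable def Dderiv {n : ℕ} (f : (Fin n → Bool) → ℝ) (i : Fin n) (x : Fin n → Bool) : ℝ :=
  (f (Function.update x i true) - f (Function.update x i false)) / 2

/-- The restriction (subfunction) `f_{x_i = b}`, viewed as a function on the full cube
(it does not depend on coordinate `i`). -/
def restr {n : ℕ} (f : (Fin n → Bool) → ℝ) (i : Fin n) (b : Bool) : (Fin n → Bool) → ℝ :=
  fun x => f (Function.update x i b)

/-- Variance under the uniform distribution. -/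
noncomputable def varE {n : ℕ} (g : (Fin n → Bool) → ℝ) : ℝ :=
  expect (fun x => g x ^ 2) - (expect g) ^ 2

/-- `dist(f,g) = Pr[f(x) ≠ g(x)]` for `x` uniform. -/
noncomputable def distf {n : ℕ} (f g : (Fin n → Bool) → ℝ) : ℝ :=
  expect (fun x => if f x = g x then 0 else 1)

/-- Decision trees over `{-1,1}^n` with `±1`-labeled leaves; at a node querying `x_i`,
the first child corresponds to `x_i = -1` and the second to `x_i = 1`. -/
inductive DTree (n : ℕ) : Type where
  | leaf : Bool → DTree n
  | node : Fin n → DTree n → DTree n → DTree n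

namespace DTree

/-- Size = number of leaves. -/
def size {n : ℕ} : DTree n → ℕ
  | leaf _ => 1
  | node _ t0 t1 => t0.size + t1.size

/-- Depth = maximum number of queries on a root-to-leaf path. -/
def depth {n : ℕ} : DTree n → ℕ
  | leaf _ => 0
  | node _ t0 t1 => 1 + max t0.depth t1.depth

/-- The `±1`-valued function computed by a decision tree. -/
def eval {n : ℕ} : DTree n → (Fin n → Bool) → ℝ
  | leaf b, _ => chiB b
  | node i t0 t1, x => if x i then t1.eval x else t0.eval x

/-- `∑_{leaves ℓ} 2^{-|ℓ|} |ℓ|`: the expected depth of the leaf reached by a uniform input. -/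
noncomputable def avgDepth {n : ℕ} : DTree n → ℝ
  | leaf _ => 0
  | node _ t0 t1 => 1 + (1 / 2) * t0.avgDepth + (1 / 2) * t1.avgDepth

/-- Whether `T` queries coordinate `i` on input `x`. -/
def queries {n : ℕ} (i : Fin n) : DTree n → (Fin n → Bool) → Bool
  | leaf _, _ => false
  | node j t0 t1, x => j = i || (if x j then queries i t1 x else queries i t0 x)

/-- The depth of the leaf reached by input `x`. -/
def pathLen {n : ℕ} : DTree n → (Fin n → Bool) → ℕ
  | leaf _, _ => 0
  | node i t0 t1, x => 1 + (if x i then t1.pathLen x else t0.pathLen x)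

end DTree

/-- `error_f(T) = Pr[f(x) ≠ T(x)]` for `x` uniform. -/
noncomputable def errorf {n : ℕ} (f : (Fin n → Bool) → ℝ) (T : DTree n) : ℝ :=
  expect (fun x => if f x = T.eval x then 0 else 1)

/-- `opt_s(f)`: the least error achievable by a decision tree of size at most `s`. -/
noncomputable def optErr {n : ℕ} (s : ℕ) (f : (Fin n → Bool) → ℝ) : ℝ :=
  sInf { e : ℝ | ∃ T : DTree n, T.size ≤ s ∧ errorf f T = e }

/-- Partial decision trees: internal nodes query coordinates, leaves are unlabeled. -/
inductive PTree (n : ℕ) : Type where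
  | leaf : PTree n
  | node : Fin n → PTree n → PTree n → PTree n

namespace PTree

/-- Whether a list of directions (`false` = the `x_i = -1` branch, `true` = the `x_i = 1`
branch) is a path from the root to a leaf. -/
def isLeafPath {n : ℕ} : PTree n → List Bool → Bool
  | .leaf, [] => true
  | .node _ t0 _, false :: p => t0.isLeafPath p
  | .node _ _ t1, true :: p => t1.isLeafPath p
  | _, _ => false

/-- Replace the leaf at path `p` by an internal node querying `x_i` with two new leaves. -/
def split {n : ℕ} : PTree n → List Bool → Fin n → PTree n
  | .leaf, [], i => .node i .leaf .leaf
  | .node j t0 t1, false :: p, i => .node j (t0.split p i) t1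
  | .node j t0 t1, true :: p, i => .node j t0 (t1.split p i)
  | t, _, _ => t

end PTree

/-- The subfunction `f_ℓ` for the leaf `ℓ` at path `p`, viewed as a function on the full
cube (the coordinates queried along the path are fixed accordingly). -/
def pathRestrict {n : ℕ} : PTree n → List Bool → ((Fin n → Bool) → ℝ) → ((Fin n → Bool) → ℝ)
  | .node j t0 _, false :: p, f => pathRestrict t0 p (restr f j false)
  | .node j _ t1, true :: p, f => pathRestrict t1 p (restr f j true)
  | _, _, f => f

/-- `∑_{leaves ℓ of T°} 2^{-|ℓ|} φ(f_ℓ)`: the leaf-average of a functional `φ` over a partial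
tree, each leaf `ℓ` weighted by the probability `2^{-|ℓ|}` that a uniform input reaches it. -/
noncomputable def leafSum {n : ℕ} (φ : ((Fin n → Bool) → ℝ) → ℝ) :
    PTree n → ((Fin n → Bool) → ℝ) → ℝ
  | .leaf, f => φ f
  | .node i t0 t1, f =>
      (1 / 2) * leafSum φ t0 (restr f i false) + (1 / 2) * leafSum φ t1 (restr f i true)

/-- `NS_δ(f, T°) = ∑_{leaves ℓ of T°} 2^{-|ℓ|} NS_δ(f_ℓ)`. -/
noncomputable def NSwrt {n : ℕ} (δ : ℝ) (f : (Fin n → Bool) → ℝ) (T : PTree n) : ℝ :=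
  leafSum (NS δ) T f

/-- `T` is a completion of the partial tree `T°`: same shape, leaves labeled `±1`. -/
def completes {n : ℕ} : PTree n → DTree n → Prop
  | .leaf, .leaf _ => True
  | .node i t0 t1, .node j s0 s1 => i = j ∧ completes t0 s0 ∧ completes t1 s1
  | _, _ => False

/-- `T` is the canonical `f`-completion of `T°`: each leaf `ℓ` is labeled `sign(E[f_ℓ])`
(with either label allowed in case of a tie `E[f_ℓ] = 0`). -/
def isFCompletion {n : ℕ} : ((Fin n → Bool) → ℝ) → PTree n → DTree n → Prop
  | f, .leaf, .leaf b => (0 < expect f → b = true) ∧ (expect f < 0 → b = false)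
  | f, .node i t0 t1, .node j s0 s1 =>
      i = j ∧ isFCompletion (restr f i false) t0 s0 ∧ isFCompletion (restr f i true) t1 s1
  | _, _, _ => False


/-! ### Auxiliary development -/

section Aux

variable {n : ℕ}

lemma isPM_restr {f : (Fin n → Bool) → ℝ} (hf : isPM f) (i : Fin n) (b : Bool) :
    isPM (restr f i b) := fun x => hf _

@[simp] lemma chiB_true : chiB true = 1 := rfl
@[simp] lemma chiB_false : chiB false = -1 := rfl

lemma expect_def (F : (Fin n → Bool) → ℝ) :
    expect F = (∑ x : Fin n → Bool, F x) / (2 : ℝ) ^ n := rfl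

lemma fcoef_def (f : (Fin n → Bool) → ℝ) (S : Finset (Fin n)) :
    fcoef f S = (∑ x : Fin n → Bool, f x * ∏ j ∈ S, chiB (x j)) / (2 : ℝ) ^ n := rfl

/-- Expansion of the noise weight into characters. -/
lemma noiseWeight_eq (δ : ℝ) (x y : Fin n → Bool) :
    noiseWeight δ x y = (1 / 4 : ℝ) ^ n *
      ∑ S : Finset (Fin n), (1 - δ) ^ S.card *
        ((∏ j ∈ S, chiB (x j)) * (∏ j ∈ S, chiB (y j))) := by
  have hfac : ∀ i : Fin n, (1 / 2 : ℝ) * (if x i = y i then 1 - δ / 2 else δ / 2)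
      = (1 / 4 : ℝ) * ((1 - δ) * (chiB (x i) * chiB (y i)) + 1) := by
    intro i
    cases hx : x i <;> cases hy : y i <;> simp [chiB] <;> ring
  unfold noiseWeight
  rw [Finset.prod_congr rfl fun i _ => hfac i, Finset.prod_mul_distrib,
    Finset.prod_const, Finset.card_univ, Fintype.card_fin,
    Finset.prod_add]
  congr 1
  rw [Finset.powerset_univ]
  refine Finset.sum_congr rfl fun S _ => ?_
  rw [Finset.prod_const_one, mul_one, Finset.prod_mul_distrib, Finset.prod_const,
    Finset.prod_mul_distrib]

/-- Noise stability. -/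
noncomputable def Stab (δ : ℝ) (f : (Fin n → Bool) → ℝ) : ℝ :=
  ∑ x : Fin n → Bool, ∑ y : Fin n → Bool, noiseWeight δ x y * (f x * f y)

lemma sum_char (f : (Fin n → Bool) → ℝ) (S : Finset (Fin n)) :
    ∑ x : Fin n → Bool, f x * ∏ j ∈ S, chiB (x j) = (2 : ℝ) ^ n * fcoef f S := by
  rw [fcoef_def, mul_div_cancel₀]
  positivity

lemma Stab_eq (δ : ℝ) (f : (Fin n → Bool) → ℝ) :
    Stab δ f = ∑ S : Finset (Fin n), (1 - δ) ^ S.card * (fcoef f S) ^ 2 := by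
  have h1 : ∀ x y : Fin n → Bool, noiseWeight δ x y * (f x * f y)
      = ∑ S : Finset (Fin n), (1 / 4 : ℝ) ^ n * ((1 - δ) ^ S.card *
          ((f x * ∏ j ∈ S, chiB (x j)) * (f y * ∏ j ∈ S, chiB (y j)))) := by
    intro x y
    rw [noiseWeight_eq, Finset.mul_sum, Finset.sum_mul]
    exact Finset.sum_congr rfl fun S _ => by ring
  unfold Stab
  simp_rw [h1]
  rw [show (∑ x : Fin n → Bool, ∑ y : Fin n → Bool, ∑ S : Finset (Fin n),
      (1 / 4 : ℝ) ^ n * ((1 - δ) ^ S.card *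
        ((f x * ∏ j ∈ S, chiB (x j)) * (f y * ∏ j ∈ S, chiB (y j)))))
    = ∑ S : Finset (Fin n), ∑ x : Fin n → Bool, ∑ y : Fin n → Bool,
      (1 / 4 : ℝ) ^ n * ((1 - δ) ^ S.card *
        ((f x * ∏ j ∈ S, chiB (x j)) * (f y * ∏ j ∈ S, chiB (y j))))
    from (Finset.sum_congr rfl fun x _ => Finset.sum_comm).trans Finset.sum_comm]
  refine Finset.sum_congr rfl fun S _ => ?_
  have expand : (1 / 4 : ℝ) ^ n * ((1 - δ) ^ S.card *
      ((∑ x : Fin n → Bool, f x * ∏ j ∈ S, chiB (x j)) *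
       (∑ y : Fin n → Bool, f y * ∏ j ∈ S, chiB (y j))))
      = ∑ x : Fin n → Bool, ∑ y : Fin n → Bool,
        (1 / 4 : ℝ) ^ n * ((1 - δ) ^ S.card *
          ((f x * ∏ j ∈ S, chiB (x j)) * (f y * ∏ j ∈ S, chiB (y j)))) := by
    rw [Finset.sum_mul_sum]
    simp only [Finset.mul_sum]
  rw [← expand, sum_char]
  have h4 : (1 / 4 : ℝ) ^ n * ((2:ℝ) ^ n * (2:ℝ) ^ n) = 1 := by
    rw [← mul_pow, ← mul_pow]; norm_num
  linear_combination ((1 - δ) ^ S.card * fcoef f S * fcoef f S) * h4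

lemma chiS_empty : ∀ x : Fin n → Bool, ∏ j ∈ (∅ : Finset (Fin n)), chiB (x j) = 1 := by
  simp

lemma sum_chi (S : Finset (Fin n)) :
    ∑ x : Fin n → Bool, ∏ j ∈ S, chiB (x j)
      = if S = ∅ then (2 : ℝ) ^ n else 0 := by
  rcases eq_or_ne S ∅ with h | h
  · subst h; simp [Finset.card_univ]
  · rw [if_neg h]
    obtain ⟨i, hi⟩ := Finset.nonempty_iff_ne_empty.2 h
    apply Finset.sum_involution
      (g := fun x _ => Function.update x i (!(x i)))
    · intro x _
      have hupd : ∀ j, chiB (Function.update x i (!(x i)) j)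
          = Function.update (fun j => chiB (x j)) i (-(chiB (x i))) j := by
        intro j
        rcases eq_or_ne j i with rfl | hj
        · simp [chiB]; cases x j <;> simp
        · simp [Function.update, hj]
      rw [Finset.prod_congr rfl fun j _ => hupd j,
        Finset.prod_update_of_mem hi, ← Finset.mul_prod_erase S _ hi,
        Finset.erase_eq]
      ring
    · intro x _ _
      intro hcontra
      have := congrFun hcontra i
      simp at this
    · intro x _
      funext j
      rcases eq_or_ne j i with rfl | hj
      · simp
      · simp [Function.update, hj]
    · intro x _; exact Finset.mem_univ _

lemma fcoef_one (S : Finset (Fin n)) :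
    fcoef (fun _ => (1:ℝ)) S = if S = ∅ then 1 else 0 := by
  rw [fcoef_def]
  simp_rw [one_mul]
  rw [sum_chi]
  rcases eq_or_ne S ∅ with h | h
  · rw [if_pos h, if_pos h, div_self (by positivity)]
  · rw [if_neg h, if_neg h, zero_div]

lemma sum_noiseWeight (δ : ℝ) :
    ∑ x : Fin n → Bool, ∑ y : Fin n → Bool, noiseWeight δ x y = 1 := by
  have h : ∑ x : Fin n → Bool, ∑ y : Fin n → Bool, noiseWeight δ x y
      = Stab (n := n) δ (fun _ => (1:ℝ)) := by
    unfold Stab; simp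
  rw [h, Stab_eq]
  simp_rw [fcoef_one]
  rw [Finset.sum_eq_single (∅ : Finset (Fin n))]
  · simp
  · intro S _ hS; simp [hS]
  · simp

lemma NS_eq_Stab {f : (Fin n → Bool) → ℝ} (hf : isPM f) (δ : ℝ) :
    NS δ f = 1 / 2 - Stab δ f / 2 := by
  have hpt : ∀ x y : Fin n → Bool,
      (if f x = f y then (0:ℝ) else 1) = (1 - f x * f y) / 2 := by
    intro x y
    rcases hf x with h1 | h1 <;> rcases hf y with h2 | h2 <;>
      rw [h1, h2] <;> norm_num
  unfold NS
  simp_rw [hpt]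
  have : ∀ x y : Fin n → Bool,
      noiseWeight δ x y * ((1 - f x * f y) / 2)
      = noiseWeight δ x y / 2 - noiseWeight δ x y * (f x * f y) / 2 := by
    intro x y; ring
  simp_rw [this, Finset.sum_sub_distrib, ← Finset.sum_div]
  rw [sum_noiseWeight]
  rfl

section SplitCoord

variable (i : Fin n)

/-- Splitting the cube along coordinate `i`. -/
noncomputable def cubeEquiv : (Fin n → Bool) ≃ Bool × ({ j // j ≠ i } → Bool) :=
  Equiv.funSplitAt i Bool

lemma cubeEquiv_symm_apply_ne (c : Bool) (z : { j // j ≠ i } → Bool) (j : Fin n)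
    (hj : j ≠ i) : (cubeEquiv i).symm (c, z) j = z ⟨j, hj⟩ := by
  simp [cubeEquiv, Equiv.funSplitAt, Equiv.piSplitAt, hj]

lemma cubeEquiv_symm_apply_self (c : Bool) (z : { j // j ≠ i } → Bool) :
    (cubeEquiv i).symm (c, z) i = c := by
  simp [cubeEquiv, Equiv.funSplitAt, Equiv.piSplitAt]

lemma update_cubeEquiv_symm (c b : Bool) (z : { j // j ≠ i } → Bool) :
    Function.update ((cubeEquiv i).symm (c, z)) i b = (cubeEquiv i).symm (b, z) := by
  funext j
  rcases eq_or_ne j i with rfl | hj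
  · rw [Function.update_self, cubeEquiv_symm_apply_self]
  · rw [Function.update_of_ne hj, cubeEquiv_symm_apply_ne i c z j hj,
      cubeEquiv_symm_apply_ne i b z j hj]

lemma sum_cube (G : (Fin n → Bool) → ℝ) :
    ∑ x : Fin n → Bool, G x
      = ∑ z : { j // j ≠ i } → Bool,
          (G ((cubeEquiv i).symm (true, z)) + G ((cubeEquiv i).symm (false, z))) := by
  rw [← Equiv.sum_comp (cubeEquiv i).symm G, Fintype.sum_prod_type, Fintype.sum_bool,
    ← Finset.sum_add_distrib]

lemma sum_update (G : (Fin n → Bool) → ℝ) (b : Bool) :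
    ∑ x : Fin n → Bool, G (Function.update x i b)
      = 2 * ∑ z : { j // j ≠ i } → Bool, G ((cubeEquiv i).symm (b, z)) := by
  rw [sum_cube i (fun x => G (Function.update x i b))]
  simp_rw [update_cubeEquiv_symm]
  rw [Finset.mul_sum]
  exact Finset.sum_congr rfl fun z _ => (two_mul _).symm

lemma sum_ind (G : (Fin n → Bool) → ℝ) (b : Bool) :
    ∑ x : Fin n → Bool, (if x i = b then G x else 0)
      = ∑ z : { j // j ≠ i } → Bool, G ((cubeEquiv i).symm (b, z)) := by
  rw [sum_cube i (fun x => if x i = b then G x else 0)]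
  cases b <;>
    simp [cubeEquiv_symm_apply_self]

lemma fcoef_restr_notMem (f : (Fin n → Bool) → ℝ) {S : Finset (Fin n)}
    (hiS : i ∉ S) (b : Bool) :
    fcoef (restr f i b) S = fcoef f S + chiB b * fcoef f (insert i S) := by
  rw [fcoef_def, fcoef_def, fcoef_def]
  unfold restr
  have key : ∑ x : Fin n → Bool, f (Function.update x i b) * ∏ j ∈ S, chiB (x j)
        = ∑ x : Fin n → Bool, f x * ∏ j ∈ S, chiB (x j)
          + chiB b * ∑ x : Fin n → Bool, f x * ∏ j ∈ insert i S, chiB (x j) := by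
      have hL : ∑ x : Fin n → Bool, f (Function.update x i b) * ∏ j ∈ S, chiB (x j)
          = 2 * ∑ z : { j // j ≠ i } → Bool,
              (f ((cubeEquiv i).symm (b, z)) *
                ∏ j ∈ S, chiB ((cubeEquiv i).symm (b, z) j)) := by
        have hprod : ∀ x : Fin n → Bool,
            ∏ j ∈ S, chiB (x j) = ∏ j ∈ S, chiB (Function.update x i b j) := by
          intro x
          refine Finset.prod_congr rfl fun j hj => ?_
          rw [Function.update_of_ne (fun h => hiS (by rw [← h]; exact hj))]
        rw [show (∑ x : Fin n → Bool, f (Function.update x i b) * ∏ j ∈ S, chiB (x j))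
            = ∑ x : Fin n → Bool,
                f (Function.update x i b) * ∏ j ∈ S, chiB (Function.update x i b j)
          from Finset.sum_congr rfl fun x _ => by rw [← hprod x]]
        exact sum_update i (fun y => f y * ∏ j ∈ S, chiB (y j)) b
      have hR : ∑ x : Fin n → Bool, f x * ∏ j ∈ S, chiB (x j)
            + chiB b * ∑ x : Fin n → Bool, f x * ∏ j ∈ insert i S, chiB (x j)
          = ∑ x : Fin n → Bool, (if x i = b then
              2 * (f x * ∏ j ∈ S, chiB (x j)) else 0) := by
        rw [Finset.mul_sum, ← Finset.sum_add_distrib]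
        refine Finset.sum_congr rfl fun x _ => ?_
        rw [Finset.prod_insert hiS]
        have hcb : chiB b * chiB (x i) = if x i = b then 1 else -1 := by
          cases b <;> cases hx : x i <;> simp [chiB]
        rcases eq_or_ne (x i) b with h | h
        · rw [if_pos h]
          have : chiB b * chiB (x i) = 1 := by rw [hcb, if_pos h]
          calc f x * ∏ j ∈ S, chiB (x j) + chiB b * (f x * (chiB (x i) * ∏ j ∈ S, chiB (x j)))
              = f x * ∏ j ∈ S, chiB (x j) + (chiB b * chiB (x i)) * (f x * ∏ j ∈ S, chiB (x j)) := by ring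
            _ = 2 * (f x * ∏ j ∈ S, chiB (x j)) := by rw [this]; ring
        · rw [if_neg h]
          have : chiB b * chiB (x i) = -1 := by rw [hcb, if_neg h]
          calc f x * ∏ j ∈ S, chiB (x j) + chiB b * (f x * (chiB (x i) * ∏ j ∈ S, chiB (x j)))
              = f x * ∏ j ∈ S, chiB (x j) + (chiB b * chiB (x i)) * (f x * ∏ j ∈ S, chiB (x j)) := by ring
            _ = 0 := by rw [this]; ring
      rw [hL, hR, sum_ind i (fun x => 2 * (f x * ∏ j ∈ S, chiB (x j))) b, Finset.mul_sum]
  show _ / ((2:ℝ)^n) = _ / ((2:ℝ)^n) + chiB b * (_ / ((2:ℝ)^n))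
  rw [key]
  ring

lemma fcoef_restr_mem (f : (Fin n → Bool) → ℝ) {S : Finset (Fin n)}
    (hiS : i ∈ S) (b : Bool) : fcoef (restr f i b) S = 0 := by
  rw [fcoef_def]
  unfold restr
  rw [div_eq_zero_iff]
  left
  have hprod : ∀ x : Fin n → Bool,
      f (Function.update x i b) * ∏ j ∈ S, chiB (x j)
        = chiB (x i) * (f (Function.update x i b) * ∏ j ∈ S.erase i, chiB (x j)) := by
    intro x
    rw [← Finset.mul_prod_erase S _ hiS]
    ring
  simp_rw [hprod]
  rw [sum_cube i (fun x => chiB (x i) *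
    (f (Function.update x i b) * ∏ j ∈ S.erase i, chiB (x j)))]
  apply Finset.sum_eq_zero
  intro z _
  have hprod2 : ∏ j ∈ S.erase i, chiB ((cubeEquiv i).symm (true, z) j)
      = ∏ j ∈ S.erase i, chiB ((cubeEquiv i).symm (false, z) j) := by
    refine Finset.prod_congr rfl fun j hj => ?_
    have hj' : j ≠ i := Finset.ne_of_mem_erase hj
    rw [cubeEquiv_symm_apply_ne i _ z j hj', cubeEquiv_symm_apply_ne i _ z j hj']
  rw [update_cubeEquiv_symm, update_cubeEquiv_symm, cubeEquiv_symm_apply_self,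
    cubeEquiv_symm_apply_self, hprod2, chiB_true, chiB_false]
  ring

end SplitCoord

lemma core {f : (Fin n → Bool) → ℝ} (hf : isPM f) (δ : ℝ) (hδ1 : δ < 1) (i : Fin n) :
    NS δ f - (1 / 2 * NS δ (restr f i false) + 1 / 2 * NS δ (restr f i true))
      = δ / (2 * (1 - δ)) * noisyInf δ i f := by
  have hρ : (1 - δ) ≠ 0 := by intro h; nlinarith
  have key : ∀ S : Finset (Fin n),
      (1/4 : ℝ) * ((1-δ)^S.card * (fcoef (restr f i false) S)^2)
        + (1/4) * ((1-δ)^S.card * (fcoef (restr f i true) S)^2)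
        - (1/2) * ((1-δ)^S.card * (fcoef f S)^2)
      = (if i ∈ S then -(1/2 : ℝ) * ((1-δ)^S.card * (fcoef f S)^2) else 0)
        + (if i ∉ S then (1/2 : ℝ) * ((1-δ)^S.card * (fcoef f (insert i S))^2) else 0) := by
    intro S
    by_cases hiS : i ∈ S
    · rw [fcoef_restr_mem i f hiS, fcoef_restr_mem i f hiS, if_pos hiS,
        if_neg (by simp [hiS])]
      ring
    · rw [fcoef_restr_notMem i f hiS, fcoef_restr_notMem i f hiS, if_neg hiS,
        if_pos hiS, chiB_true, chiB_false]
      ring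
  have hInf : noisyInf δ i f
      = ∑ S ∈ Finset.univ.filter (fun S : Finset (Fin n) => i ∈ S),
          (1-δ)^S.card * (fcoef f S)^2 := by
    rw [noisyInf]
    exact (Finset.sum_filter _ _).symm
  set B : ℝ := ∑ S ∈ Finset.univ.filter (fun S : Finset (Fin n) => i ∉ S),
      (1-δ)^S.card * (fcoef f (insert i S))^2 with hBdef
  have hbij : (1-δ) * B = noisyInf δ i f := by
    rw [hBdef, hInf, Finset.mul_sum]
    refine Finset.sum_bij' (fun S _ => insert i S) (fun S _ => S.erase i)
      ?_ ?_ ?_ ?_ ?_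
    · intro S hS; simp
    · intro S hS
      simp only [Finset.mem_filter, Finset.mem_univ, true_and] at hS ⊢
      simp
    · intro S hS
      simp only [Finset.mem_filter, Finset.mem_univ, true_and] at hS
      exact Finset.erase_insert hS
    · intro S hS
      simp only [Finset.mem_filter, Finset.mem_univ, true_and] at hS
      exact Finset.insert_erase hS
    · intro S hS
      simp only [Finset.mem_filter, Finset.mem_univ, true_and] at hS
      rw [Finset.card_insert_of_notMem hS, pow_succ]
      ring
  have hite1 : ∑ S : Finset (Fin n),
      (if i ∈ S then -(1/2 : ℝ) * ((1-δ)^S.card * (fcoef f S)^2) else 0)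
      = -(1/2) * noisyInf δ i f := by
    rw [noisyInf, Finset.mul_sum]
    refine Finset.sum_congr rfl fun S _ => ?_
    by_cases hiS : i ∈ S <;> simp [hiS]
  have hite2 : ∑ S : Finset (Fin n),
      (if i ∉ S then (1/2 : ℝ) * ((1-δ)^S.card * (fcoef f (insert i S))^2) else 0)
      = (1/2) * B := by
    rw [hBdef, Finset.mul_sum, Finset.sum_filter]
  have main : (1/4 : ℝ) * (∑ S : Finset (Fin n), (1-δ)^S.card * (fcoef (restr f i false) S)^2)
      + (1/4) * (∑ S : Finset (Fin n), (1-δ)^S.card * (fcoef (restr f i true) S)^2)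
      - (1/2) * (∑ S : Finset (Fin n), (1-δ)^S.card * (fcoef f S)^2)
      = δ / (2 * (1 - δ)) * noisyInf δ i f := by
    rw [Finset.mul_sum, Finset.mul_sum, Finset.mul_sum, ← Finset.sum_add_distrib,
      ← Finset.sum_sub_distrib, Finset.sum_congr rfl fun S _ => key S,
      Finset.sum_add_distrib, hite1, hite2]
    have hB' : B = noisyInf δ i f / (1 - δ) := by
      rw [eq_div_iff hρ]; linear_combination hbij
    rw [hB']
    field_simp
    ring
  rw [NS_eq_Stab hf, NS_eq_Stab (isPM_restr hf i false), NS_eq_Stab (isPM_restr hf i true),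
    Stab_eq, Stab_eq, Stab_eq]
  linear_combination main

end Aux

/-- Fact 3.2, stability gain of a split: splitting the leaf `ℓ*` of a
partial tree `T°` with a query to `x_i` decreases `NS_δ(f, ·)` by exactly
`2^{-|ℓ*|} ⬝ (δ/(2(1-δ))) ⬝ Inf_i^{(δ)}(f_{ℓ*})`. -/
theorem statement3 {n : ℕ} (f : (Fin n → Bool) → ℝ) (hf : isPM f)
    (δ : ℝ) (hδ0 : 0 < δ) (hδ1 : δ < 1)
    (T : PTree n) (p : List Bool) (hp : T.isLeafPath p = true) (i : Fin n) :
    NSwrt δ f T - NSwrt δ f (T.split p i)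
      = (1 / 2 : ℝ) ^ p.length * (δ / (2 * (1 - δ))) * noisyInf δ i (pathRestrict T p f) := by
  induction T generalizing p f with
  | leaf =>
    cases p with
    | nil =>
      simp only [NSwrt, PTree.split, leafSum, pathRestrict, List.length_nil, pow_zero, one_mul]
      exact core hf δ hδ1 i
    | cons b q => simp [PTree.isLeafPath] at hp
  | node j t0 t1 ih0 ih1 =>
    cases p with
    | nil => simp [PTree.isLeafPath] at hp
    | cons b q =>
      cases b
      · have hp' : t0.isLeafPath q = true := by simpa [PTree.isLeafPath] using hp
        have ih := ih0 (restr f j false) (isPM_restr hf j false) q hp'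
        simp only [NSwrt, PTree.split, leafSum, pathRestrict, List.length_cons] at ih ⊢
        linear_combination (1/2 : ℝ) * ih
      · have hp' : t1.isLeafPath q = true := by simpa [PTree.isLeafPath] using hp
        have ih := ih1 (restr f j true) (isPM_restr hf j true) q hp'
        simp only [NSwrt, PTree.split, leafSum, pathRestrict, List.length_cons] at ih ⊢
        linear_combination (1/2 : ℝ) * ih
end

section
/- Let G : [0,1] → [0,1] be concave with G(0) = G(1) = 0, G(1/2) = 1, and G(p) = G(1−p) for all p. Then for every function f : {−1,1}^n → {−1,1} and all coordinates i, j ∈ [n]: if E[f(x)·x_i]² ≥ E[f(x)·x_j]² then PurityGain_{G,f}(x_i) ≥ PurityGain_{G,f}(x_j), where x is uniform on {−1,1}^n. -/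
open Finset

/-- `Pr[f(x) = v]` for `x` uniform. -/
noncomputable def prEq {n : ℕ} (f : (Fin n → Bool) → ℝ) (v : ℝ) : ℝ :=
  expect (fun x => if f x = v then 1 else 0)

/-- `dist_{±1}(f) = min {Pr[f(x) = 1], Pr[f(x) = -1]}`. -/
noncomputable def distPM {n : ℕ} (f : (Fin n → Bool) → ℝ) : ℝ :=
  min (prEq f 1) (prEq f (-1))

/-- Purity gain of attribute `x_i` w.r.t. the impurity function `G`:
`PurityGain_{G,f}(x_i) = G(dist_{±1}(f)) - E_b[G(dist_{±1}(f_{x_i=b}))]`. -/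
noncomputable def purityGain {n : ℕ} (G : ℝ → ℝ) (f : (Fin n → Bool) → ℝ) (i : Fin n) : ℝ :=
  G (distPM f) - (1 / 2) * (G (distPM (restr f i false)) + G (distPM (restr f i true)))

section Aux
variable {n : ℕ}

def flipE (i : Fin n) : Equiv.Perm (Fin n → Bool) :=
  Function.Involutive.toPerm (fun x => Function.update x i (!x i)) (by
    intro x; funext k
    by_cases h : k = i
    · subst h; simp
    · simp [Function.update_apply, h])

lemma sum_comp_flip (i : Fin n) (F : (Fin n → Bool) → ℝ) :
    ∑ x : Fin n → Bool, F (Function.update x i (!x i)) = ∑ x : Fin n → Bool, F x :=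
  Equiv.sum_comp (flipE i) F

lemma restr_sum_add (f : (Fin n → Bool) → ℝ) (i : Fin n) :
    (∑ x : Fin n → Bool, restr f i true x) + (∑ x : Fin n → Bool, restr f i false x)
      = 2 * ∑ x : Fin n → Bool, f x := by
  rw [← Finset.sum_add_distrib]
  have hpt : ∀ x : Fin n → Bool, restr f i true x + restr f i false x
      = f x + f (Function.update x i (!x i)) := by
    intro x
    cases h : x i
    · have : Function.update x i false = x := by rw [← h]; exact Function.update_eq_self i x
      simp [restr, this, h, add_comm]
    · have : Function.update x i true = x := by rw [← h]; exact Function.update_eq_self i x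
      simp [restr, this, h]
  calc ∑ x : Fin n → Bool, (restr f i true x + restr f i false x)
      = ∑ x : Fin n → Bool, (f x + f (Function.update x i (!x i))) := by
        exact Finset.sum_congr rfl fun x _ => hpt x
    _ = 2 * ∑ x : Fin n → Bool, f x := by
        rw [Finset.sum_add_distrib, sum_comp_flip i f]; ring

lemma restr_sum_sub (f : (Fin n → Bool) → ℝ) (i : Fin n) :
    (∑ x : Fin n → Bool, restr f i true x) - (∑ x : Fin n → Bool, restr f i false x)
      = 2 * ∑ x : Fin n → Bool, f x * chiB (x i) := by
  rw [← Finset.sum_sub_distrib]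
  have hpt : ∀ x : Fin n → Bool, restr f i true x - restr f i false x
      = f x * chiB (x i) - f (Function.update x i (!x i)) * chiB (x i) := by
    intro x
    cases h : x i
    · have hx : Function.update x i false = x := by rw [← h]; exact Function.update_eq_self i x
      simp [restr, hx, h, chiB]; ring
    · have hx : Function.update x i true = x := by rw [← h]; exact Function.update_eq_self i x
      simp [restr, hx, h, chiB]
  have hflip : ∑ x : Fin n → Bool, f (Function.update x i (!x i)) * chiB (x i)
      = - ∑ x : Fin n → Bool, f x * chiB (x i) := by
    have := sum_comp_flip i (fun y => f y * chiB (!y i))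
    have e : ∀ x : Fin n → Bool,
        f (Function.update x i (!x i)) * chiB (!(Function.update x i (!x i)) i)
        = f (Function.update x i (!x i)) * chiB (x i) := by
      intro x; simp
    rw [Finset.sum_congr rfl (fun x _ => e x)] at this
    rw [this, ← Finset.sum_neg_distrib]
    refine Finset.sum_congr rfl fun x _ => ?_
    cases h : x i <;> simp [h, chiB]
  calc ∑ x : Fin n → Bool, (restr f i true x - restr f i false x)
      = ∑ x : Fin n → Bool, (f x * chiB (x i) - f (Function.update x i (!x i)) * chiB (x i)) :=
        Finset.sum_congr rfl fun x _ => hpt x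
    _ = 2 * ∑ x : Fin n → Bool, f x * chiB (x i) := by
        rw [Finset.sum_sub_distrib, hflip]; ring

end Aux

section Aux2
variable {n : ℕ}

lemma two_pow_pos' : (0:ℝ) < 2 ^ n := by positivity

lemma prEq_nonneg (g : (Fin n → Bool) → ℝ) (v : ℝ) : 0 ≤ prEq g v := by
  unfold prEq _root_.expect
  apply div_nonneg _ (le_of_lt two_pow_pos')
  apply Finset.sum_nonneg
  intro x _; split <;> norm_num

lemma prEq_add (g : (Fin n → Bool) → ℝ) (hg : isPM g) : prEq g 1 + prEq g (-1) = 1 := by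
  unfold prEq _root_.expect
  rw [← add_div, ← Finset.sum_add_distrib]
  have hpt : ∀ x : Fin n → Bool,
      ((if g x = 1 then (1:ℝ) else 0) + (if g x = -1 then 1 else 0)) = 1 := by
    intro x; rcases hg x with h | h <;> norm_num [h]
  rw [Finset.sum_congr rfl fun x _ => hpt x, Finset.sum_const, Finset.card_univ]
  simp

lemma prEq_sub (g : (Fin n → Bool) → ℝ) (hg : isPM g) : prEq g 1 - prEq g (-1) = _root_.expect g := by
  unfold prEq _root_.expect
  rw [div_sub_div_same, ← Finset.sum_sub_distrib]
  congr 1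
  refine Finset.sum_congr rfl fun x _ => ?_
  rcases hg x with h | h <;> norm_num [h]

lemma prEq_one (g : (Fin n → Bool) → ℝ) (hg : isPM g) : prEq g 1 = (1 + expect g) / 2 := by
  have h1 := prEq_add g hg; have h2 := prEq_sub g hg; linarith

lemma prEq_negone (g : (Fin n → Bool) → ℝ) (hg : isPM g) :
    prEq g (-1) = (1 - expect g) / 2 := by
  have h1 := prEq_add g hg; have h2 := prEq_sub g hg; linarith

lemma expect_bounds (g : (Fin n → Bool) → ℝ) (hg : isPM g) :
    -1 ≤ _root_.expect g ∧ _root_.expect g ≤ 1 := by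
  have h1 := prEq_nonneg g 1; have h2 := prEq_nonneg g (-1)
  rw [prEq_one g hg] at h1; rw [prEq_negone g hg] at h2
  constructor <;> linarith

lemma G_distPM (G : ℝ → ℝ) (hsym : ∀ p ∈ Set.Icc (0 : ℝ) 1, G p = G (1 - p))
    (g : (Fin n → Bool) → ℝ) (hg : isPM g) :
    G (distPM g) = G ((1 - _root_.expect g) / 2) := by
  obtain ⟨hb1, hb2⟩ := expect_bounds g hg
  unfold distPM
  rw [prEq_one g hg, prEq_negone g hg]
  rcases le_total (expect g) 0 with h | h
  · rw [min_eq_left (by linarith)]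
    rw [hsym ((1 + expect g)/2) ⟨by linarith, by linarith⟩]
    ring_nf
  · rw [min_eq_right (by linarith)]

lemma key (G : ℝ → ℝ) (hconc : ConcaveOn ℝ (Set.Icc (0 : ℝ) 1) G)
    (μ a b : ℝ) (hb : 0 ≤ b) (hba : b ≤ a)
    (h1 : μ + a ≤ 1) (h2 : -1 ≤ μ - a) :
    G ((1 - (μ + a)) / 2) + G ((1 - (μ - a)) / 2)
      ≤ G ((1 - (μ + b)) / 2) + G ((1 - (μ - b)) / 2) := by
  rcases eq_or_lt_of_le (hb.trans hba) with h | ha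
  · have hb0 : b = 0 := le_antisymm (hba.trans h.symm.le) hb
    rw [← h, hb0]
  · have hp : (1 - (μ + a)) / 2 ∈ Set.Icc (0:ℝ) 1 := ⟨by linarith, by linarith⟩
    have hq : (1 - (μ - a)) / 2 ∈ Set.Icc (0:ℝ) 1 := ⟨by linarith, by linarith⟩
    have hl1 : (0:ℝ) ≤ (a + b) / (2 * a) := by positivity
    have hl2 : (0:ℝ) ≤ (a - b) / (2 * a) := by
      apply div_nonneg (by linarith) (by linarith)
    have hl3 : (a + b) / (2 * a) + (a - b) / (2 * a) = 1 := by
      field_simp; ring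
    have ha' : a ≠ 0 := ha.ne'
    have e1 : ((a + b) / (2 * a)) • ((1 - (μ + a)) / 2) + ((a - b) / (2 * a)) • ((1 - (μ - a)) / 2)
        = (1 - (μ + b)) / 2 := by
      simp only [smul_eq_mul]; field_simp; ring
    have e2 : ((a - b) / (2 * a)) • ((1 - (μ + a)) / 2) + ((a + b) / (2 * a)) • ((1 - (μ - a)) / 2)
        = (1 - (μ - b)) / 2 := by
      simp only [smul_eq_mul]; field_simp; ring
    have c1 := hconc.2 hp hq hl1 hl2 hl3
    have c2 := hconc.2 hp hq hl2 hl1 (by linarith [hl3])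
    rw [e1] at c1; rw [e2] at c2
    simp only [smul_eq_mul] at c1 c2
    have hsum : G ((1 - (μ + a)) / 2) + G ((1 - (μ - a)) / 2)
        = ((a + b) / (2 * a) * G ((1 - (μ + a)) / 2) + (a - b) / (2 * a) * G ((1 - (μ - a)) / 2))
        + ((a - b) / (2 * a) * G ((1 - (μ + a)) / 2) + (a + b) / (2 * a) * G ((1 - (μ - a)) / 2)) := by
      linear_combination (-(G ((1 - (μ + a)) / 2)) - G ((1 - (μ - a)) / 2)) * hl3
    linarith [c1, c2]

end Aux2

lemma key2 (G : ℝ → ℝ) (hconc : ConcaveOn ℝ (Set.Icc (0 : ℝ) 1) G)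
    (μ ci cj : ℝ) (hsq : cj ^ 2 ≤ ci ^ 2)
    (h1 : μ + ci ≤ 1) (h2 : -1 ≤ μ + ci) (h3 : μ - ci ≤ 1) (h4 : -1 ≤ μ - ci) :
    G ((1 - (μ + ci)) / 2) + G ((1 - (μ - ci)) / 2)
      ≤ G ((1 - (μ + cj)) / 2) + G ((1 - (μ - cj)) / 2) := by
  rcases le_total 0 ci with hci | hci <;> rcases le_total 0 cj with hcj | hcj
  · exact key G hconc μ ci cj hcj (by nlinarith) h1 h4
  · rw [show μ + cj = μ - -cj from by ring, show μ - cj = μ + -cj from by ring]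
    linarith [key G hconc μ ci (-cj) (by linarith) (by nlinarith) h1 h4]
  · rw [show μ + ci = μ - -ci from by ring, show μ - ci = μ + -ci from by ring]
    linarith [key G hconc μ (-ci) cj hcj (by nlinarith) (by linarith) (by linarith)]
  · rw [show μ + ci = μ - -ci from by ring, show μ - ci = μ + -ci from by ring,
      show μ + cj = μ - -cj from by ring, show μ - cj = μ + -cj from by ring]
    linarith [key G hconc μ (-ci) (-cj) (by linarith) (by nlinarith) (by linarith) (by linarith)]

lemma restr_expect_true (f : (Fin n → Bool) → ℝ) (k : Fin n) :
    _root_.expect (restr f k true) = _root_.expect f + fcoef f {k} := by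
  have h1 := restr_sum_add f k
  have h2 := restr_sum_sub f k
  unfold fcoef _root_.expect
  simp only [Finset.prod_singleton]
  rw [← add_div]
  congr 1
  linarith

lemma restr_expect_false (f : (Fin n → Bool) → ℝ) (k : Fin n) :
    _root_.expect (restr f k false) = _root_.expect f - fcoef f {k} := by
  have h1 := restr_sum_add f k
  have h2 := restr_sum_sub f k
  unfold fcoef _root_.expect
  simp only [Finset.prod_singleton]
  rw [div_sub_div_same]
  congr 1
  linarith

/-- for any impurity function `G : [0,1] → [0,1]` (concave, symmetric
about `1/2`, `G(0) = G(1) = 0`, `G(1/2) = 1`) and `f : {-1,1}ⁿ → {-1,1}`: if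
`E[f(x)x_i]² ≥ E[f(x)x_j]²` then `PurityGain_{G,f}(x_i) ≥ PurityGain_{G,f}(x_j)`. -/
theorem statement18 {n : ℕ} (G : ℝ → ℝ)
    (hconc : ConcaveOn ℝ (Set.Icc (0 : ℝ) 1) G)
    (hrange : ∀ p ∈ Set.Icc (0 : ℝ) 1, G p ∈ Set.Icc (0 : ℝ) 1)
    (h0 : G 0 = 0) (h1 : G 1 = 0) (hhalf : G (1 / 2) = 1)
    (hsym : ∀ p ∈ Set.Icc (0 : ℝ) 1, G p = G (1 - p))
    (f : (Fin n → Bool) → ℝ) (hf : isPM f) (i j : Fin n)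
    (hij : fcoef f {j} ^ 2 ≤ fcoef f {i} ^ 2) :
    purityGain G f j ≤ purityGain G f i := by
  have hrt : ∀ (k : Fin n) (b : Bool), isPM (restr f k b) := fun k b x => hf _
  unfold purityGain
  rw [G_distPM G hsym (restr f i false) (hrt i false),
    G_distPM G hsym (restr f i true) (hrt i true),
    G_distPM G hsym (restr f j false) (hrt j false),
    G_distPM G hsym (restr f j true) (hrt j true),
    restr_expect_true f i, restr_expect_false f i,
    restr_expect_true f j, restr_expect_false f j]
  obtain ⟨A1, A2⟩ := expect_bounds (restr f i true) (hrt i true)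
  obtain ⟨B1, B2⟩ := expect_bounds (restr f i false) (hrt i false)
  obtain ⟨C1, C2⟩ := expect_bounds (restr f j true) (hrt j true)
  obtain ⟨D1, D2⟩ := expect_bounds (restr f j false) (hrt j false)
  rw [restr_expect_true f i] at A1 A2
  rw [restr_expect_false f i] at B1 B2
  rw [restr_expect_true f j] at C1 C2
  rw [restr_expect_false f j] at D1 D2
  have := key2 G hconc (_root_.expect f) (fcoef f {i}) (fcoef f {j}) hij A2 A1 B2 B1
  linarith
end
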